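/- Let Φ, Φ̃ : ℂⁿ → ℝ be strictly plurisubharmonic quadratic forms with Φ̃ ≤ Φ pointwise, let κ♭ : ℂⁿ → ℂⁿ be an ℝ-linear isomorphism, let â ∈ ℂ, and let Ψ be a holomorphic quadratic form on ℂ^{2n} such that 2 Re Ψ(z, w̄) = Φ̃(z) + Φ(w) − R(z, w) for all z, w ∈ ℂⁿ, where R is a nonnegative quadratic form on ℂⁿ × ℂⁿ (as a real vector space) satisfying c|z − κ♭(w)|² ≤ R(z, w) ≤ C|z − κ♭(w)|² for some C, c > 0. Let u be an entire function with |u(w)| ≤ C₀⟨w⟩^{N} e^{Φ(w)} on ℂⁿ for some C₀ > 0, N ∈ ℝ, and set G u(z) = â ∫_{ℂⁿ} e^{2Ψ(z,w̄)} u(w) e^{-2Φ(w)} dL(w). Then for every z₀ ∈ ℂⁿ∖{0} with Φ(z₀) − Φ̃(z₀) > 0, there exist an open conic neighborhood V of z₀ in ℂⁿ∖{0} and constants C₁, c₁ > 0 such that |Gu(z)| ≤ C₁ e^{Φ(z) − c₁|z|²} for all z ∈ V; in other words, WF^{1/2}_Φ(Gu) is contained in the radical Rad(Φ − Φ̃)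 = {z ∈ ℂⁿ : Φ(z) − Φ̃(z) = 0}. -/

import Mathlib

open Matrix MeasureTheory ENNReal

noncomputable section

/-- The squared Euclidean norm `|z|²` on `ℂⁿ`. -/
def eSq {n : ℕ} (z : Fin n → ℂ) : ℝ := ∑ i, Complex.normSq (z i)

/-- The Japanese bracket `⟨z⟩ = (1 + |z|²)^{1/2}`. -/
def jb {n : ℕ} (z : Fin n → ℂ) : ℝ := Real.sqrt (1 + eSq z)

/-- `Φ : ℂⁿ → ℝ` is a (real) quadratic form of the underlying real coordinates. -/
def IsRQuad {n : ℕ} (Φ : (Fin n → ℂ) → ℝ) : Prop :=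
  ∃ B : (Fin n → ℂ) →ₗ[ℝ] (Fin n → ℂ) →ₗ[ℝ] ℝ, ∀ z, Φ z = B z z

/-- `Φ : ℂⁿ → ℝ` is a strictly plurisubharmonic quadratic form.  For a quadratic form `Φ`,
the Levi form satisfies `(∂²_{z z̄}Φ) w ⋅ w̄ = (Φ(w) + Φ(i w))/2`, so positive definiteness of
the Levi matrix is equivalent to `Φ(w) + Φ(i·w) > 0` for all `w ≠ 0`. -/
def IsSPSH {n : ℕ} (Φ : (Fin n → ℂ) → ℝ) : Prop :=
  IsRQuad Φ ∧ ∀ z : Fin n → ℂ, z ≠ 0 → 0 < Φ z + Φ (Complex.I • z)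

/-- The squared weighted norm `‖u‖_s² = ∫ |u(z)|² ⟨z⟩^{2s} e^{-2Φ(z)} L(dz)` (in `ℝ≥0∞`). -/
def hnorm {n : ℕ} (Φ : (Fin n → ℂ) → ℝ) (s : ℝ) (u : (Fin n → ℂ) → ℂ) : ℝ≥0∞ :=
  ∫⁻ z : Fin n → ℂ, (‖u z‖₊ : ℝ≥0∞) ^ 2 * ENNReal.ofReal (jb z ^ (2 * s) * Real.exp (-2 * Φ z))

/-- A conic subset of `ℂⁿ`. -/
def IsConic {n : ℕ} (V : Set (Fin n → ℂ)) : Prop := ∀ z ∈ V, ∀ t : ℝ, 0 < t → t • z ∈ V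

/-- The `1/2`-Gelfand–Shilov wavefront set of `u` relative to `Φ`: the complement in
`ℂⁿ∖{0}` of the points having an open conic neighborhood in `ℂⁿ∖{0}` on which
`|u(z)| ≤ C e^{Φ(z) - c|z|²}`. -/
def wf {n : ℕ} (Φ : (Fin n → ℂ) → ℝ) (u : (Fin n → ℂ) → ℂ) : Set (Fin n → ℂ) :=
  {z₀ | z₀ ≠ 0 ∧ ¬ ∃ V : Set (Fin n → ℂ), IsOpen V ∧ IsConic V ∧ (0 : Fin n → ℂ) ∉ V ∧ z₀ ∈ V ∧
      ∃ C c : ℝ, 0 < C ∧ 0 < c ∧ ∀ z ∈ V, ‖u z‖ ≤ C * Real.exp (Φ z - c * eSq z)}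

/-- A holomorphic quadratic form on `ℂ^{2n} = ℂⁿ_z × ℂⁿ_θ`. -/
def IsCQuad2 {n : ℕ} (Ψ : (Fin n → ℂ) → (Fin n → ℂ) → ℂ) : Prop :=
  ∃ B : ((Fin n → ℂ) × (Fin n → ℂ)) →ₗ[ℂ] ((Fin n → ℂ) × (Fin n → ℂ)) →ₗ[ℂ] ℂ,
    ∀ z θ, Ψ z θ = B (z, θ) (z, θ)

/-- A real quadratic form on `ℂⁿ × ℂⁿ` viewed as a real vector space. -/
def IsRQuadPair {n : ℕ} (R : (Fin n → ℂ) → (Fin n → ℂ) → ℝ) : Prop :=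
  ∃ B : ((Fin n → ℂ) × (Fin n → ℂ)) →ₗ[ℝ] ((Fin n → ℂ) × (Fin n → ℂ)) →ₗ[ℝ] ℝ,
    ∀ z w, R z w = B (z, w) (z, w)

/-- The Bergman-form integral operator
`G u (z) = a ∫ e^{2Ψ(z, w̄)} u(w) e^{-2Φ(w)} L(dw)`. -/
def berg {n : ℕ} (a : ℂ) (Ψ : (Fin n → ℂ) → (Fin n → ℂ) → ℂ) (Φ : (Fin n → ℂ) → ℝ)
    (u : (Fin n → ℂ) → ℂ) (z : Fin n → ℂ) : ℂ :=
  a * ∫ w : Fin n → ℂ, Complex.exp (2 * Ψ z (star w)) * u w * (Real.exp (-2 * Φ w) : ℂ)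

/-!
Since `2 Re Ψ(z, w̄) - 2Φ(w) = Φ̃(z) - Φ(w) - R(z, w)`, the integrand of `Gu(z)` is bounded by
`C₀ ⟨w⟩^N e^{Φ̃(z) - c|z - κ w|²}`. Because `κ` is invertible, `|w|² ≲ |z|² + |z - κ w|²`, so
for every `ε > 0` the factor `⟨w⟩^N` is at most `M_ε e^{ε|z|² + (c/2)|z - κ w|²}`; the Gaussian
`e^{-(c/2)|z - κ w|²}` that is left has a `z`-independent integral, whence
`|Gu(z)| ≤ K_ε e^{Φ̃(z) + ε|z|²}`. If `Φ(z₀) > Φ̃(z₀)`, then `Φ - Φ̃ > δ|z|²` on an open cone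
around `z₀`, and `ε = δ/2` gives the decay `e^{Φ(z) - (δ/2)|z|²}` there.
-/

lemma eSq_nonneg {n : ℕ} (z : Fin n → ℂ) : 0 ≤ eSq z :=
  Finset.sum_nonneg fun _ _ => Complex.normSq_nonneg _

lemma continuous_eSq {n : ℕ} : Continuous (eSq (n := n)) :=
  continuous_finsetSum _ fun i _ => Complex.continuous_normSq.comp (continuous_apply i)

lemma eSq_smul {n : ℕ} (t : ℝ) (z : Fin n → ℂ) : eSq (t • z) = t ^ 2 * eSq z := by
  simp [eSq, Finset.mul_sum, Complex.normSq_mul, sq]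

lemma norm_sq_le_eSq {n : ℕ} (z : Fin n → ℂ) : ‖z‖ ^ 2 ≤ eSq z := by
  refine (Real.le_sqrt (norm_nonneg z) (eSq_nonneg z)).1 <|
    (pi_norm_le_iff_of_nonneg (Real.sqrt_nonneg _)).2 fun i => ?_
  rw [Real.le_sqrt (norm_nonneg _) (eSq_nonneg z), Complex.sq_norm]
  exact Finset.single_le_sum (fun j _ => Complex.normSq_nonneg (z j)) (Finset.mem_univ i)

lemma eSq_le_card_mul_norm_sq {n : ℕ} (z : Fin n → ℂ) : eSq z ≤ n * ‖z‖ ^ 2 := by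
  calc eSq z ≤ ∑ _i : Fin n, ‖z‖ ^ 2 := Finset.sum_le_sum fun i _ => by
        rw [← Complex.sq_norm]
        exact pow_le_pow_left₀ (norm_nonneg _) (norm_le_pi_norm z i) 2
    _ = n * ‖z‖ ^ 2 := by simp

lemma one_le_jb {n : ℕ} (w : Fin n → ℂ) : 1 ≤ jb w :=
  Real.one_le_sqrt.2 (le_add_of_nonneg_right (eSq_nonneg w))

lemma jb_sq {n : ℕ} (w : Fin n → ℂ) : jb w ^ 2 = 1 + eSq w :=
  Real.sq_sqrt (add_nonneg zero_le_one (eSq_nonneg w))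

namespace IsRQuad

variable {n : ℕ} {Φ Φ' Q : (Fin n → ℂ) → ℝ}

lemma continuous (h : IsRQuad Φ) : Continuous Φ := by
  obtain ⟨B, hB⟩ := h
  rw [funext hB]
  exact B.toContinuousBilinearMap.continuous₂.comp (continuous_id.prodMk continuous_id)

lemma map_smul (h : IsRQuad Φ) (t : ℝ) (z : Fin n → ℂ) : Φ (t • z) = t ^ 2 * Φ z := by
  obtain ⟨B, hB⟩ := h
  simp only [hB, LinearMap.map_smul, LinearMap.smul_apply, smul_eq_mul]
  ring

lemma map_zero (h : IsRQuad Φ) : Φ 0 = 0 := by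
  simpa using h.map_smul 0 0

lemma sub (h : IsRQuad Φ) (h' : IsRQuad Φ') : IsRQuad fun z => Φ z - Φ' z := by
  obtain ⟨B, hB⟩ := h
  obtain ⟨B', hB'⟩ := h'
  exact ⟨B - B', fun z => by simp [hB, hB']⟩

lemma isOpen_setOf_mul_eSq_lt (hQ : IsRQuad Q) (δ : ℝ) :
    IsOpen {z | δ * eSq z < Q z} :=
  isOpen_lt (continuous_const.mul continuous_eSq) hQ.continuous

lemma isConic_setOf_mul_eSq_lt (hQ : IsRQuad Q) (δ : ℝ) :
    IsConic {z | δ * eSq z < Q z} := by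
  intro z hz t ht
  simp only [Set.mem_ofPred_eq, eSq_smul, hQ.map_smul] at hz ⊢
  nlinarith [pow_pos ht 2]

lemma zero_notMem_setOf_mul_eSq_lt (hQ : IsRQuad Q) (δ : ℝ) :
    (0 : Fin n → ℂ) ∉ {z | δ * eSq z < Q z} := by
  simp [hQ.map_zero, eSq]

end IsRQuad

lemma pow_le_factorial_div_mul_exp (k : ℕ) {ε t : ℝ} (hε : 0 < ε) (ht : 0 ≤ t) :
    t ^ k ≤ k.factorial / ε ^ k * Real.exp (ε * t) :=
  calc t ^ k = k.factorial / ε ^ k * ((ε * t) ^ k / k.factorial) := by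
        field_simp
        ring
    _ ≤ k.factorial / ε ^ k * Real.exp (ε * t) := by
        gcongr
        exact Real.pow_div_factorial_le_exp _ (by positivity) k

lemma exists_jb_rpow_le_mul_exp {n : ℕ} (N : ℝ) {ε : ℝ} (hε : 0 < ε) :
    ∃ M, 0 ≤ M ∧ ∀ w : Fin n → ℂ, jb w ^ N ≤ M * Real.exp (ε * eSq w) := by
  set k := ⌈N⌉₊
  have hNk : N ≤ ((2 * k : ℕ) : ℝ) := by
    push_cast
    linarith [Nat.le_ceil N, (Nat.cast_nonneg k : (0 : ℝ) ≤ k)]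
  refine ⟨k.factorial / ε ^ k * Real.exp ε, by positivity, fun w => ?_⟩
  calc jb w ^ N ≤ jb w ^ (((2 * k : ℕ) : ℝ)) :=
        Real.rpow_le_rpow_of_exponent_le (one_le_jb w) hNk
    _ = (1 + eSq w) ^ k := by rw [Real.rpow_natCast, pow_mul, jb_sq]
    _ ≤ k.factorial / ε ^ k * Real.exp (ε * (1 + eSq w)) :=
        pow_le_factorial_div_mul_exp k hε (by linarith [eSq_nonneg w])
    _ = k.factorial / ε ^ k * Real.exp ε * Real.exp (ε * eSq w) := by
        rw [mul_add, mul_one, Real.exp_add, mul_assoc]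

lemma exists_eSq_le_mul_add {n : ℕ} (κ : (Fin n → ℂ) ≃ₗ[ℝ] (Fin n → ℂ)) :
    ∃ A, 0 < A ∧ ∀ z w, eSq w ≤ A * (eSq z + eSq (z - κ w)) := by
  set B := ‖LinearMap.toContinuousLinearMap (κ.symm : (Fin n → ℂ) →ₗ[ℝ] (Fin n → ℂ))‖
  refine ⟨2 * n * B ^ 2 + 1, by positivity, fun z w => ?_⟩
  have hw : ‖w‖ ≤ B * (‖z‖ + ‖z - κ w‖) :=
    calc ‖w‖ = ‖κ.symm (κ w)‖ := by rw [κ.symm_apply_apply]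
      _ ≤ B * ‖κ w‖ := (LinearMap.toContinuousLinearMap _).le_opNorm (κ w)
      _ ≤ B * (‖z‖ + ‖z - κ w‖) := by
        gcongr
        simpa using norm_sub_le z (z - κ w)
  have hsq : ‖w‖ ^ 2 ≤ 2 * B ^ 2 * (eSq z + eSq (z - κ w)) :=
    calc ‖w‖ ^ 2 ≤ (B * (‖z‖ + ‖z - κ w‖)) ^ 2 := by gcongr
      _ ≤ 2 * B ^ 2 * (‖z‖ ^ 2 + ‖z - κ w‖ ^ 2) := by
        nlinarith [sq_nonneg (‖z‖ - ‖z - κ w‖), sq_nonneg B]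
      _ ≤ 2 * B ^ 2 * (eSq z + eSq (z - κ w)) := by
        gcongr <;> exact norm_sq_le_eSq _
  have hnn : 0 ≤ eSq z + eSq (z - κ w) := add_nonneg (eSq_nonneg _) (eSq_nonneg _)
  calc eSq w ≤ n * ‖w‖ ^ 2 := eSq_le_card_mul_norm_sq w
    _ ≤ n * (2 * B ^ 2 * (eSq z + eSq (z - κ w))) := by gcongr
    _ ≤ (2 * n * B ^ 2 + 1) * (eSq z + eSq (z - κ w)) := by nlinarith

section AffineChangeOfVariables

variable {E F : Type*} [NormedAddCommGroup E] [NormedSpace ℝ E] [MeasurableSpace E] [BorelSpace E]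
  [FiniteDimensional ℝ E] [NormedAddCommGroup F]
  (μ : Measure E) [μ.IsAddHaarMeasure] (κ : E ≃ₗ[ℝ] E) (z : E)

lemma measurableEmbedding_sub_linearEquiv : MeasurableEmbedding fun w => z - κ w := by
  convert ((κ.toContinuousLinearEquiv.toHomeomorph.trans (Homeomorph.neg E)).trans
    (Homeomorph.addLeft z)).measurableEmbedding using 1
  ext w
  simp [sub_eq_add_neg]

lemma map_sub_linearEquiv_addHaar :
    Measure.map (fun w => z - κ w) μ =
      ENNReal.ofReal |(LinearMap.det (κ : E →ₗ[ℝ] E))⁻¹| • μ := by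
  have hcomp : (fun w => z - κ w) = (fun v => z - v) ∘ (κ : E →ₗ[ℝ] E) := rfl
  rw [hcomp, ← Measure.map_map (measurable_const_sub z)
      (LinearMap.continuous_of_finiteDimensional _).measurable,
    Measure.map_linearMap_addHaar_eq_smul_addHaar μ (LinearEquiv.isUnit_det' κ).ne_zero,
    Measure.map_smul, Measure.map_sub_left_eq_self]

variable {μ} in
lemma MeasureTheory.Integrable.comp_sub_linearEquiv {G : E → F} (hG : Integrable G μ) :
    Integrable (fun w => G (z - κ w)) μ := by
  refine (measurableEmbedding_sub_linearEquiv κ z).integrable_map_iff.1 ?_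
  rw [map_sub_linearEquiv_addHaar]
  exact hG.smul_measure ENNReal.ofReal_ne_top

lemma integral_comp_sub_linearEquiv [NormedSpace ℝ F] (G : E → F) :
    ∫ w, G (z - κ w) ∂μ = |(LinearMap.det (κ : E →ₗ[ℝ] E))⁻¹| • ∫ v, G v ∂μ := by
  rw [← (measurableEmbedding_sub_linearEquiv κ z).integral_map, map_sub_linearEquiv_addHaar,
    integral_smul_measure, ENNReal.toReal_ofReal (abs_nonneg _)]

end AffineChangeOfVariables

lemma integrable_exp_neg_mul_eSq {n : ℕ} {b : ℝ} (hb : 0 < b) :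
    Integrable fun v : Fin n → ℂ => Real.exp (-b * eSq v) := by
  have hℂ : Integrable fun ζ : ℂ => Real.exp (-b * ‖ζ‖ ^ 2) := by
    refine (GaussianFourier.integrable_cexp_neg_mul_sq_norm_add
      (V := ℂ) (b := (b : ℂ)) (by simpa using hb) 0 0).norm.congr (ae_of_all _ fun ζ => ?_)
    simp [Complex.norm_exp, ← Complex.ofReal_pow]
  refine (Integrable.fintype_prod (fun (_ : Fin n) => hℂ)).congr (ae_of_all _ fun v => ?_)
  simp only [eSq, ← Real.exp_sum, Finset.mul_sum, Complex.sq_norm]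

section Bergman

variable {n : ℕ} {Φ Φt : (Fin n → ℂ) → ℝ} {κ : (Fin n → ℂ) ≃ₗ[ℝ] (Fin n → ℂ)}
  {Ψ : (Fin n → ℂ) → (Fin n → ℂ) → ℂ} {R : (Fin n → ℂ) → (Fin n → ℂ) → ℝ} {c : ℝ}
  {u : (Fin n → ℂ) → ℂ}

lemma exists_norm_le_mul_exp_of_growth {C₀ N : ℝ}
    (hg : ∀ w, ‖u w‖ ≤ C₀ * jb w ^ N * Real.exp (Φ w)) {η : ℝ} (hη : 0 < η) :
    ∃ M, 0 ≤ M ∧ ∀ w, ‖u w‖ ≤ M * Real.exp (Φ w + η * eSq w) := by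
  obtain ⟨M, hM, hjb⟩ := exists_jb_rpow_le_mul_exp (n := n) N hη
  refine ⟨max C₀ 0 * M, by positivity, fun w => ?_⟩
  calc ‖u w‖ ≤ C₀ * jb w ^ N * Real.exp (Φ w) := hg w
    _ ≤ max C₀ 0 * (M * Real.exp (η * eSq w)) * Real.exp (Φ w) := by
      have hjb_nonneg : 0 ≤ jb w ^ N := Real.rpow_nonneg (zero_le_one.trans (one_le_jb w)) N
      gcongr
      exacts [le_max_left _ _, hjb w]
    _ = max C₀ 0 * M * Real.exp (Φ w + η * eSq w) := by
      rw [Real.exp_add]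
      ring

lemma norm_berg_integrand_le
    (hre : ∀ z w : Fin n → ℂ, 2 * (Ψ z (star w)).re = Φt z + Φ w - R z w)
    (hlow : ∀ z w, c * eSq (z - κ w) ≤ R z w) {M η : ℝ} (hM : 0 ≤ M)
    (hu : ∀ w, ‖u w‖ ≤ M * Real.exp (Φ w + η * eSq w)) (z w : Fin n → ℂ) :
    ‖Complex.exp (2 * Ψ z (star w)) * u w * (Real.exp (-2 * Φ w) : ℂ)‖ ≤
      M * Real.exp (Φt z + η * eSq w - c * eSq (z - κ w)) :=
  calc ‖Complex.exp (2 * Ψ z (star w)) * u w * (Real.exp (-2 * Φ w) : ℂ)‖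
      = Real.exp (2 * (Ψ z (star w)).re) * ‖u w‖ * Real.exp (-2 * Φ w) := by
        simp [Complex.norm_exp]
    _ ≤ Real.exp (2 * (Ψ z (star w)).re) * (M * Real.exp (Φ w + η * eSq w)) *
          Real.exp (-2 * Φ w) := by
        gcongr
        exact hu w
    _ = M * Real.exp (2 * (Ψ z (star w)).re + (Φ w + η * eSq w) + -2 * Φ w) := by
        simp only [Real.exp_add]
        ring
    _ = M * Real.exp (Φt z + η * eSq w - R z w) := by
        rw [hre]
        ring_nf
    _ ≤ M * Real.exp (Φt z + η * eSq w - c * eSq (z - κ w)) := by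
        gcongr
        exact hlow z w

lemma exists_norm_berg_le (a : ℂ)
    (hre : ∀ z w : Fin n → ℂ, 2 * (Ψ z (star w)).re = Φt z + Φ w - R z w)
    (hc : 0 < c) (hlow : ∀ z w, c * eSq (z - κ w) ≤ R z w) {C₀ N : ℝ}
    (hg : ∀ w, ‖u w‖ ≤ C₀ * jb w ^ N * Real.exp (Φ w)) {ε : ℝ} (hε : 0 < ε) :
    ∃ K, 0 < K ∧ ∀ z, ‖berg a Ψ Φ u z‖ ≤ K * Real.exp (Φt z + ε * eSq z) := by
  obtain ⟨A, hA, hcomp⟩ := exists_eSq_le_mul_add κ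
  -- `η A ≤ ε` and `η A ≤ c / 2`: the growth `e^{η|w|²}` of `u` is shared between `e^{ε|z|²}`
  -- and half of the Gaussian `e^{-c|z - κ w|²}`.
  set η := min ε (c / 2) / A
  have hη : 0 < η := div_pos (lt_min hε (half_pos hc)) hA
  have hηA : η * A = min ε (c / 2) := div_mul_cancel₀ _ hA.ne'
  obtain ⟨M, hM, hu⟩ := exists_norm_le_mul_exp_of_growth hg hη
  have hpt : ∀ z w, ‖Complex.exp (2 * Ψ z (star w)) * u w * (Real.exp (-2 * Φ w) : ℂ)‖ ≤
      M * Real.exp (Φt z + ε * eSq z) * Real.exp (-(c / 2) * eSq (z - κ w)) := by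
    intro z w
    refine (norm_berg_integrand_le hre hlow hM hu z w).trans ?_
    rw [mul_assoc, ← Real.exp_add]
    gcongr
    have := mul_le_mul_of_nonneg_left (hcomp z w) hη.le
    nlinarith [min_le_left ε (c / 2), min_le_right ε (c / 2), eSq_nonneg z,
      eSq_nonneg (z - κ w)]
  set I := |(LinearMap.det (κ : (Fin n → ℂ) →ₗ[ℝ] (Fin n → ℂ)))⁻¹| *
    ∫ v : Fin n → ℂ, Real.exp (-(c / 2) * eSq v)
  refine ⟨max (‖a‖ * M * I) 1, lt_max_of_lt_right one_pos, fun z => ?_⟩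
  have hint := (integrable_exp_neg_mul_eSq (n := n) (half_pos hc)).comp_sub_linearEquiv κ z
  have hI : ∫ w, Real.exp (-(c / 2) * eSq (z - κ w)) = I :=
    integral_comp_sub_linearEquiv volume κ z fun v => Real.exp (-(c / 2) * eSq v)
  calc ‖berg a Ψ Φ u z‖
      = ‖a‖ * ‖∫ w, Complex.exp (2 * Ψ z (star w)) * u w * (Real.exp (-2 * Φ w) : ℂ)‖ := by
        rw [berg, norm_mul]
    _ ≤ ‖a‖ * ∫ w, M * Real.exp (Φt z + ε * eSq z) * Real.exp (-(c / 2) * eSq (z - κ w)) := by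
        gcongr
        exact norm_integral_le_of_norm_le (hint.const_mul _) (ae_of_all _ (hpt z))
    _ = ‖a‖ * M * I * Real.exp (Φt z + ε * eSq z) := by
        rw [integral_const_mul, hI]
        ring
    _ ≤ max (‖a‖ * M * I) 1 * Real.exp (Φt z + ε * eSq z) := by
        gcongr
        exact le_max_left _ _

lemma exists_conic_nhds_norm_berg_le (a : ℂ) (hQ : IsRQuad fun z => Φ z - Φt z)
    (hre : ∀ z w : Fin n → ℂ, 2 * (Ψ z (star w)).re = Φt z + Φ w - R z w)
    (hc : 0 < c) (hlow : ∀ z w, c * eSq (z - κ w) ≤ R z w) {C₀ N : ℝ}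
    (hg : ∀ w, ‖u w‖ ≤ C₀ * jb w ^ N * Real.exp (Φ w)) {z₀ : Fin n → ℂ}
    (hz₀ : 0 < Φ z₀ - Φt z₀) :
    ∃ V : Set (Fin n → ℂ), IsOpen V ∧ IsConic V ∧ (0 : Fin n → ℂ) ∉ V ∧ z₀ ∈ V ∧
      ∃ C₁ c₁ : ℝ, 0 < C₁ ∧ 0 < c₁ ∧
        ∀ z ∈ V, ‖berg a Ψ Φ u z‖ ≤ C₁ * Real.exp (Φ z - c₁ * eSq z) := by
  obtain ⟨δ, hδ, hδz₀⟩ := exists_pos_mul_lt hz₀ (eSq z₀)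
  obtain ⟨K, hK, hbound⟩ := exists_norm_berg_le a hre hc hlow hg (half_pos hδ)
  refine ⟨_, hQ.isOpen_setOf_mul_eSq_lt δ, hQ.isConic_setOf_mul_eSq_lt δ,
    hQ.zero_notMem_setOf_mul_eSq_lt δ, by rwa [mul_comm] at hδz₀, K, δ / 2, hK, half_pos hδ,
    fun z hz => (hbound z).trans ?_⟩
  gcongr
  linarith [hz.out]

end Bergman

theorem stmt_9_general (n : ℕ) (Φ Φt : (Fin n → ℂ) → ℝ)
    (hΦ : IsSPSH Φ) (hΦt : IsSPSH Φt) (hle : ∀ z, Φt z ≤ Φ z)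
    (κ : (Fin n → ℂ) ≃ₗ[ℝ] (Fin n → ℂ)) (a : ℂ)
    (Ψ : (Fin n → ℂ) → (Fin n → ℂ) → ℂ)
    (R : (Fin n → ℂ) → (Fin n → ℂ) → ℝ)
    (hre : ∀ z w : Fin n → ℂ, 2 * (Ψ z (star w)).re = Φt z + Φ w - R z w)
    (C c : ℝ) (hc : 0 < c)
    (hsand : ∀ z w : Fin n → ℂ, c * eSq (z - κ w) ≤ R z w ∧ R z w ≤ C * eSq (z - κ w))
    (u : (Fin n → ℂ) → ℂ)
    (C₀ N : ℝ)
    (hg : ∀ w : Fin n → ℂ, ‖u w‖ ≤ C₀ * jb w ^ N * Real.exp (Φ w)) :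
    (∀ z₀ : Fin n → ℂ, z₀ ≠ 0 → 0 < Φ z₀ - Φt z₀ →
      ∃ V : Set (Fin n → ℂ), IsOpen V ∧ IsConic V ∧ (0 : Fin n → ℂ) ∉ V ∧ z₀ ∈ V ∧
        ∃ C₁ c₁ : ℝ, 0 < C₁ ∧ 0 < c₁ ∧
          ∀ z ∈ V, ‖berg a Ψ Φ u z‖ ≤ C₁ * Real.exp (Φ z - c₁ * eSq z)) ∧
    wf Φ (berg a Ψ Φ u) ⊆ {z : Fin n → ℂ | Φ z - Φt z = 0} := by
  have hcone := fun z₀ (hz₀ : 0 < Φ z₀ - Φt z₀) =>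
    exists_conic_nhds_norm_berg_le a (hΦ.1.sub hΦt.1) hre hc (fun z w => (hsand z w).1) hg hz₀
  refine ⟨fun z₀ _ => hcone z₀, fun z₀ hz₀ => ?_⟩
  by_contra hne
  exact hz₀.2 (hcone z₀ (lt_of_le_of_ne (sub_nonneg.2 (hle z₀)) (Ne.symm hne)))

/-- With `Φ̃ ≤ Φ` strictly plurisubharmonic quadratic forms, `κ♭` an
`ℝ`-linear isomorphism, and `Ψ` a holomorphic quadratic form whose real part satisfies
`2 Re Ψ(z,w̄) = Φ̃(z) + Φ(w) − R(z,w)` with `R` a nonnegative quadratic form comparable to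
`|z − κ♭(w)|²`, the Bergman operator `G` regularizes outside the radical: for every
`z₀ ≠ 0` with `Φ(z₀) − Φ̃(z₀) > 0` there is an open conic neighborhood of `z₀` on which
`|Gu(z)| ≤ C₁ e^{Φ(z) − c₁|z|²}`; consequently `WF^{1/2}_Φ(Gu) ⊆ Rad(Φ − Φ̃)`. -/
theorem stmt_9 (n : ℕ) (hn : 1 ≤ n) (Φ Φt : (Fin n → ℂ) → ℝ)
    (hΦ : IsSPSH Φ) (hΦt : IsSPSH Φt) (hle : ∀ z, Φt z ≤ Φ z)
    (κ : (Fin n → ℂ) ≃ₗ[ℝ] (Fin n → ℂ)) (a : ℂ)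
    (Ψ : (Fin n → ℂ) → (Fin n → ℂ) → ℂ) (hΨ : IsCQuad2 Ψ)
    (R : (Fin n → ℂ) → (Fin n → ℂ) → ℝ) (hRq : IsRQuadPair R)
    (hR0 : ∀ z w, 0 ≤ R z w)
    (hre : ∀ z w : Fin n → ℂ, 2 * (Ψ z (star w)).re = Φt z + Φ w - R z w)
    (C c : ℝ) (hC : 0 < C) (hc : 0 < c)
    (hsand : ∀ z w : Fin n → ℂ, c * eSq (z - κ w) ≤ R z w ∧ R z w ≤ C * eSq (z - κ w))
    (u : (Fin n → ℂ) → ℂ) (hu : Differentiable ℂ u)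
    (C₀ N : ℝ) (hC₀ : 0 < C₀)
    (hg : ∀ w : Fin n → ℂ, ‖u w‖ ≤ C₀ * jb w ^ N * Real.exp (Φ w)) :
    (∀ z₀ : Fin n → ℂ, z₀ ≠ 0 → 0 < Φ z₀ - Φt z₀ →
      ∃ V : Set (Fin n → ℂ), IsOpen V ∧ IsConic V ∧ (0 : Fin n → ℂ) ∉ V ∧ z₀ ∈ V ∧
        ∃ C₁ c₁ : ℝ, 0 < C₁ ∧ 0 < c₁ ∧
          ∀ z ∈ V, ‖berg a Ψ Φ u z‖ ≤ C₁ * Real.exp (Φ z - c₁ * eSq z)) ∧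
    wf Φ (berg a Ψ Φ u) ⊆ {z : Fin n → ℂ | Φ z - Φt z = 0} :=
  stmt_9_general n Φ Φt hΦ hΦt hle κ a Ψ R hre C c hc hsand u C₀ N hg
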